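/- Let B and C be complex matrices such that C B and B C are square. Let s = ind(I − B C). Then (I − C B)^d = I + C ((I − B C)^d) B − ∑_{i=0}^{s-1} C (I − B C)^i (I − B C)^π B. -/

import Mathlib

open Matrix Finset

attribute [local instance] Classical.propDecidable

noncomputable def drazin {n : Type*} [Fintype n] [DecidableEq n]
    (A : Matrix n n ℂ) : Matrix n n ℂ :=
  if h : ∃ X : Matrix n n ℂ,
      A * X = X * A ∧ X * A * X = X ∧ ∃ k : ℕ, A ^ (k + 1) * X = A ^ k
  then h.choose else 0

noncomputable def ind {n : Type*} [Fintype n] [DecidableEq n]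
    (A : Matrix n n ℂ) : ℕ :=
  sInf {k : ℕ | (A ^ k).rank = (A ^ (k + 1)).rank}

noncomputable def spi {n : Type*} [Fintype n] [DecidableEq n]
    (A : Matrix n n ℂ) : Matrix n n ℂ :=
  1 - A * drazin A

/-!
Put `A = 1 - BC`, `π = 1 - A A^d` and `S = ∑_{i<s} A^i π`. As `A^s π = 0`, the geometric series
makes `S` an inverse of `BC = 1 - A` on the range of `π`: `BC S = S BC = π`. Since
`(1 + C Z B)(1 + C W B) = 1 + C (Z + W + Z BC W) B`, the defining equations of a Drazin inverse of
`1 - CB` for `1 + C (A^d - S) B` reduce to identities between square matrices, which follow from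
these relations.
-/

structure IsDrazinInverse {M : Type*} [Monoid M] (a x : M) : Prop where
  commute : Commute a x
  mul_mul_self : x * a * x = x
  exists_pow_succ_mul : ∃ k : ℕ, a ^ (k + 1) * x = a ^ k

section Monoid

variable {M : Type*} [Monoid M] {a x y u : M}

theorem pow_succ_mul_eq_pow_of_le {k N : ℕ} (h : a ^ (k + 1) * x = a ^ k) (hkN : k ≤ N) :
    a ^ (N + 1) * x = a ^ N := by
  obtain ⟨j, rfl⟩ := Nat.exists_eq_add_of_le hkN
  rw [show k + j + 1 = j + (k + 1) by omega, pow_add, mul_assoc, h, ← pow_add, add_comm]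

theorem pow_add_mul_pow_eq_pow {r : ℕ} (h : a ^ (r + 1) * u = a ^ r) (j : ℕ) :
    a ^ (r + j) * u ^ j = a ^ r := by
  induction j with
  | zero => simp
  | succ j ih =>
    rw [show r + (j + 1) = j + (r + 1) by omega, pow_add, pow_succ' u, mul_assoc,
      ← mul_assoc (a ^ (r + 1)), h, ← mul_assoc, ← pow_add, add_comm j r, ih]

theorem isDrazinInverse_pow_mul_pow {r : ℕ} (hc : Commute a u) (h : a ^ (r + 1) * u = a ^ r) :
    IsDrazinInverse a (a ^ r * u ^ (r + 1)) := by
  have key := pow_add_mul_pow_eq_pow h (r + 1)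
  refine ⟨((Commute.refl a).pow_right r).mul_right (hc.pow_right _), ?_, r, ?_⟩
  · calc a ^ r * u ^ (r + 1) * a * (a ^ r * u ^ (r + 1))
        = a ^ r * (u ^ (r + 1) * a ^ (r + 1)) * u ^ (r + 1) := by
          simp only [pow_succ' a r, mul_assoc]
      _ = a ^ (r + (r + 1)) * u ^ (r + 1) * u ^ (r + 1) := by
          rw [(hc.pow_pow _ _).symm.eq, pow_add a r (r + 1)]; simp only [mul_assoc]
      _ = a ^ r * u ^ (r + 1) := by rw [key]
  · rw [← mul_assoc, ← pow_add, add_comm, key]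

namespace IsDrazinInverse

theorem pow_succ_mul_pow (h : IsDrazinInverse a x) (j : ℕ) : x ^ (j + 1) * a ^ j = x := by
  induction j with
  | zero => simp
  | succ j ih =>
    have hxxa : x * x * a = x := by rw [mul_assoc, ← h.commute.eq, ← mul_assoc, h.mul_mul_self]
    calc x ^ (j + 1 + 1) * a ^ (j + 1) = x ^ j * (x * x * a) * a ^ j := by
          rw [pow_succ x (j + 1), pow_succ x j, pow_succ' a j]; simp only [mul_assoc]
      _ = x := by rw [hxxa, ← pow_succ, ih]

theorem unique (hx : IsDrazinInverse a x) (hy : IsDrazinInverse a y) : x = y := by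
  obtain ⟨k, hk⟩ := hx.exists_pow_succ_mul
  obtain ⟨l, hl⟩ := hy.exists_pow_succ_mul
  set N := max k l
  have hxN := pow_succ_mul_eq_pow_of_le hk (le_max_left k l)
  have hyN := pow_succ_mul_eq_pow_of_le hl (le_max_right k l)
  have hy_pow : a ^ N * y ^ (N + 1) = y := by
    rw [(hy.commute.pow_pow _ _).eq, hy.pow_succ_mul_pow]
  have hx_eq : x = x * a * y :=
    calc x = x ^ (N + 1) * a ^ N := (hx.pow_succ_mul_pow N).symm
      _ = x ^ (N + 1) * a ^ N * (a * y) := by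
        rw [mul_assoc, ← mul_assoc (a ^ N), ← pow_succ, hyN]
      _ = x * a * y := by rw [hx.pow_succ_mul_pow, mul_assoc]
  have hy_eq : y = x * a * y :=
    calc y = a ^ N * y ^ (N + 1) := hy_pow.symm
      _ = x * a ^ (N + 1) * y ^ (N + 1) := by rw [← (hx.commute.pow_left _).eq, hxN]
      _ = x * a * y := by rw [pow_succ', mul_assoc x, mul_assoc a, hy_pow, mul_assoc]
  exact hx_eq.trans hy_eq.symm

end IsDrazinInverse

end Monoid

section Ring

variable {R : Type*} [Ring R] {a x p : R}

theorem IsDrazinInverse.commute_one_sub_mul (h : IsDrazinInverse a x) : Commute a (1 - a * x) :=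
  (Commute.one_right a).sub_right ((Commute.refl a).mul_right h.commute)

theorem IsDrazinInverse.one_sub_mul_mul_self (h : IsDrazinInverse a x) : (1 - a * x) * x = 0 := by
  rw [sub_mul, one_mul, h.commute.eq, h.mul_mul_self, sub_self]

theorem IsDrazinInverse.isIdempotentElem_one_sub_mul (h : IsDrazinInverse a x) :
    IsIdempotentElem (1 - a * x) :=
  IsIdempotentElem.one_sub <| by rw [IsIdempotentElem, mul_assoc, ← mul_assoc x, h.mul_mul_self]

theorem pow_mul_one_sub_mul_eq_zero {k : ℕ} (hk : a ^ (k + 1) * x = a ^ k) :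
    a ^ k * (1 - a * x) = 0 := by
  rw [mul_sub, mul_one, ← mul_assoc, ← pow_succ, hk, sub_self]

theorem one_sub_mul_geom_sum_mul_eq {s : ℕ} (hs : a ^ s * p = 0) :
    (1 - a) * ((∑ i ∈ range s, a ^ i) * p) = p := by
  rw [← mul_assoc, mul_neg_geom_sum, sub_mul, one_mul, hs, sub_zero]

theorem geom_sum_mul_mul_one_sub_eq (hc : Commute a p) {s : ℕ} (hs : a ^ s * p = 0) :
    (∑ i ∈ range s, a ^ i) * p * (1 - a) = p := by
  rw [mul_assoc, ← ((Commute.one_left p).sub_left hc).eq, ← mul_assoc, geom_sum_mul_neg,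
    sub_mul, one_mul, hs, sub_zero]

theorem mul_geom_sum_mul_eq (hc : Commute a p) (hp : IsIdempotentElem p) (s : ℕ) :
    p * ((∑ i ∈ range s, a ^ i) * p) = (∑ i ∈ range s, a ^ i) * p := by
  rw [← mul_assoc, (Commute.sum_right _ _ _ fun i _ => (hc.pow_left i).symm).eq, mul_assoc, hp.eq]

end Ring

open Polynomial in
theorem exists_isDrazinInverse_of_isAlgebraic {K A : Type*} [Field K] [Ring A] [Algebra K A]
    {a : A} (ha : IsAlgebraic K a) : ∃ x, IsDrazinInverse a x := by
  obtain ⟨p, hp0, hpa⟩ := ha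
  -- `p = X^r q` with `q(0) ≠ 0`, so `a^r (a h + q(0)) = 0` where `h = q.divX (a)`.
  obtain ⟨q, hpq, hq⟩ := p.exists_eq_pow_rootMultiplicity_mul_and_not_dvd hp0 0
  set r := p.rootMultiplicity 0
  set c := q.coeff 0
  have hc : c ≠ 0 := by rwa [map_zero, sub_zero, X_dvd_iff] at hq
  have hcomm : Commute a (aeval a q.divX) := by simpa using (Commute.all X q.divX).map (aeval a)
  have h0 : a ^ r * (a * aeval a q.divX + algebraMap K A c) = 0 := by
    have := congrArg (aeval a) hpq
    rw [← X_mul_divX_add q] at this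
    simp only [hpa, map_mul, map_pow, map_add, aeval_X, aeval_C, map_zero, sub_zero] at this
    exact this.symm
  have hu : a ^ (r + 1) * (-c⁻¹ • aeval a q.divX) = a ^ r := by
    rw [mul_add, Algebra.algebraMap_eq_smul_one, mul_smul_comm, mul_one, add_eq_zero_iff_eq_neg,
      ← mul_assoc, ← pow_succ] at h0
    rw [mul_smul_comm, h0, smul_neg, smul_smul, neg_mul, neg_smul, neg_neg, inv_mul_cancel₀ hc,
      one_smul]
  exact ⟨_, isDrazinInverse_pow_mul_pow (hcomm.smul_right _) hu⟩

section Drazin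

variable {p : Type*} [Fintype p] [DecidableEq p]

theorem isDrazinInverse_drazin (A : Matrix p p ℂ) : IsDrazinInverse A (drazin A) := by
  obtain ⟨X, hX⟩ :=
    exists_isDrazinInverse_of_isAlgebraic (Algebra.IsAlgebraic.isAlgebraic (R := ℂ) A)
  have h : ∃ X : Matrix p p ℂ,
      A * X = X * A ∧ X * A * X = X ∧ ∃ k : ℕ, A ^ (k + 1) * X = A ^ k :=
    ⟨X, hX.commute, hX.mul_mul_self, hX.exists_pow_succ_mul⟩
  obtain ⟨h₁, h₂, h₃⟩ := h.choose_spec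
  rw [drazin, dif_pos h]
  exact ⟨h₁, h₂, h₃⟩

theorem IsDrazinInverse.drazin_eq {A X : Matrix p p ℂ} (h : IsDrazinInverse A X) : drazin A = X :=
  (isDrazinInverse_drazin A).unique h

theorem Matrix.pow_mul_eq_zero_of_rank_pow_eq {K q : Type*} [Field K] [Fintype q]
    {A : Matrix p p K} {P : Matrix p q K} {s k : ℕ}
    (hs : (A ^ s).rank = (A ^ (s + 1)).rank) (hk : A ^ k * P = 0) : A ^ s * P = 0 := by
  rw [rank, rank, ← toLin'_apply', ← toLin'_apply', toLin'_pow, toLin'_pow] at hs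
  set f := toLin' A
  have hker : LinearMap.ker (f ^ s) = LinearMap.ker (f ^ (s + 1)) := by
    refine Submodule.eq_of_le_of_finrank_eq ?_ ?_
    · rw [pow_succ', Module.End.mul_eq_comp]
      exact LinearMap.ker_le_ker_comp _ _
    · have h₁ := LinearMap.finrank_range_add_finrank_ker (f ^ s)
      have h₂ := LinearMap.finrank_range_add_finrank_ker (f ^ (s + 1))
      omega
  rw [← toLin'.map_eq_zero_iff, toLin'_mul, toLin'_pow, ← LinearMap.range_le_ker_iff] at hk ⊢
  calc LinearMap.range (toLin' P) ≤ LinearMap.ker (f ^ k) := hk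
    _ ≤ LinearMap.ker (f ^ (s + k)) := by
      rw [pow_add, Module.End.mul_eq_comp]; exact LinearMap.ker_le_ker_comp _ _
    _ = LinearMap.ker (f ^ s) := (Module.End.ker_pow_constant hker k).symm

theorem pow_ind_mul_spi (A : Matrix p p ℂ) : A ^ ind A * spi A = 0 := by
  obtain ⟨k, hk⟩ := (isDrazinInverse_drazin A).exists_pow_succ_mul
  have hk_mem : k ∈ {j : ℕ | (A ^ j).rank = (A ^ (j + 1)).rank} := by
    refine le_antisymm ?_ (pow_succ A k ▸ rank_mul_le_left _ _)
    rw [← hk]; exact rank_mul_le_left _ _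
  exact pow_mul_eq_zero_of_rank_pow_eq (Nat.sInf_mem ⟨k, hk_mem⟩)
    (pow_mul_one_sub_mul_eq_zero hk)

end Drazin

section Jacobson

variable {R : Type*} [Ring R] {m n : Type*} [Fintype m] [Fintype n]
  (C : Matrix n m R) (B : Matrix m n R)

theorem Matrix.one_add_mul_mul_mul_one_add [DecidableEq n] (Z W : Matrix m m R) :
    (1 + C * Z * B) * (1 + C * W * B) = 1 + C * (Z + W + Z * (B * C) * W) * B := by
  simp only [Matrix.mul_add, Matrix.add_mul, Matrix.mul_one, Matrix.one_mul, Matrix.mul_assoc]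
  abel

theorem Matrix.one_sub_mul_pow_mul [DecidableEq m] [DecidableEq n] (k : ℕ) :
    (1 - C * B) ^ k * C = C * (1 - B * C) ^ k := by
  induction k with
  | zero => simp
  | succ k ih =>
    have h : (1 - C * B) * C = C * (1 - B * C) := by
      rw [Matrix.sub_mul, Matrix.mul_sub, Matrix.one_mul, Matrix.mul_one, Matrix.mul_assoc]
    rw [pow_succ', Matrix.mul_assoc, ih, ← Matrix.mul_assoc, h, Matrix.mul_assoc, ← pow_succ']

theorem Matrix.isDrazinInverse_one_sub_mul_comm [DecidableEq m] [DecidableEq n]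
    {D S : Matrix m m R} (hD : IsDrazinInverse (1 - B * C) D)
    (hSl : B * C * S = 1 - (1 - B * C) * D) (hSr : S * (B * C) = 1 - (1 - B * C) * D)
    (hπS : (1 - (1 - B * C) * D) * S = S) :
    IsDrazinInverse (1 - C * B) (1 + C * (D - S) * B) := by
  have hM : 1 - C * B = 1 + C * (-1 : Matrix m m R) * B := by
    rw [Matrix.mul_neg, Matrix.mul_one, Matrix.neg_mul, sub_eq_add_neg]
  have hMX : (1 - C * B) * (1 + C * (D - S) * B) = 1 + C * (-S) * B := by
    rw [hM, one_add_mul_mul_mul_one_add]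
    congr 3
    linear_combination (norm := noncomm_ring) hSl
  have hXM : (1 + C * (D - S) * B) * (1 - C * B) = 1 + C * (-S) * B := by
    rw [hM, one_add_mul_mul_mul_one_add]
    congr 3
    linear_combination (norm := noncomm_ring) hSr - hD.commute.eq
  refine ⟨hMX.trans hXM.symm, ?_, ?_⟩
  · rw [hXM, one_add_mul_mul_mul_one_add]
    congr 3
    linear_combination (norm := noncomm_ring) -hSr * (D - S) - hD.one_sub_mul_mul_self + hπS
  · obtain ⟨k, hk⟩ := hD.exists_pow_succ_mul
    have hS : (1 - B * C) ^ k * -S = 0 := by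
      rw [mul_neg, ← hπS, ← mul_assoc, pow_mul_one_sub_mul_eq_zero hk, zero_mul, neg_zero]
    refine ⟨k, ?_⟩
    rw [pow_succ, mul_assoc, hMX, mul_add, mul_one, ← Matrix.mul_assoc, ← Matrix.mul_assoc,
      one_sub_mul_pow_mul, Matrix.mul_assoc C, hS, Matrix.mul_zero, Matrix.zero_mul, add_zero]

end Jacobson

theorem stmt18 {n m : ℕ} (C : Matrix (Fin n) (Fin m) ℂ) (B : Matrix (Fin m) (Fin n) ℂ) :
    drazin (1 - C * B) = 1 + C * drazin (1 - B * C) * B -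
      ∑ i ∈ range (ind (1 - B * C)),
        C * (1 - B * C) ^ i * spi (1 - B * C) * B := by
  set A := 1 - B * C
  have hD := isDrazinInverse_drazin A
  have hs : A ^ ind A * (1 - A * drazin A) = 0 := pow_ind_mul_spi A
  have hBC : B * C = 1 - A := (sub_sub_cancel 1 (B * C)).symm
  set S := (∑ i ∈ range (ind A), A ^ i) * spi A
  have hSl : B * C * S = 1 - A * drazin A := by
    rw [hBC]; exact one_sub_mul_geom_sum_mul_eq hs
  have hSr : S * (B * C) = 1 - A * drazin A := by
    rw [hBC]; exact geom_sum_mul_mul_one_sub_eq hD.commute_one_sub_mul hs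
  have hπS : (1 - A * drazin A) * S = S :=
    mul_geom_sum_mul_eq hD.commute_one_sub_mul hD.isIdempotentElem_one_sub_mul _
  have hJ := isDrazinInverse_one_sub_mul_comm C B hD hSl hSr hπS
  have hsum : ∑ i ∈ range (ind A), C * A ^ i * spi A * B = C * S * B := by
    simp only [S, Matrix.sum_mul, Matrix.mul_sum, Matrix.mul_assoc]
  rw [hJ.drazin_eq, hsum, Matrix.mul_sub, Matrix.sub_mul, add_sub_assoc]
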